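/- arXiv:2302.05189 — 5 statements merged into one kernel-verified Lean document; each statement's English description precedes it below -/
import Mathlib

section
/- Suppose 2^m − 1 = r₁ · r₂ with gcd(r₁, r₂) = 1 and r₁, r₂ > 1. Then the multiplicative order of 2 modulo r₁ equals m, or the multiplicative order of 2 modulo r₂ equals m. -/
lemma aux_order_dvd (m r : ℕ) (hr : 1 < r) (hm0 : 0 < m) (hdvd : r ∣ 2 ^ m - 1) :
    orderOf (2 : ZMod r) ∣ m ∧ r ∣ 2 ^ orderOf (2 : ZMod r) - 1 ∧
      0 < orderOf (2 : ZMod r) := by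
  haveI : NeZero r := ⟨by omega⟩
  have hcast : ((2 ^ m - 1 : ℕ) : ZMod r) = 0 :=
    (ZMod.natCast_eq_zero_iff _ _).mpr hdvd
  have hpow : (2 : ZMod r) ^ m = 1 := by
    have h1 : (1:ℕ) ≤ 2 ^ m := Nat.one_le_two_pow
    have : ((2 ^ m : ℕ) : ZMod r) = 1 := by
      conv_lhs => rw [show (2 ^ m : ℕ) = (2 ^ m - 1) + 1 from (Nat.sub_add_cancel h1).symm]
      rw [Nat.cast_add, hcast, Nat.cast_one, zero_add]
    push_cast at this
    exact this
  have hdvd' : orderOf (2 : ZMod r) ∣ m := orderOf_dvd_of_pow_eq_one hpow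
  have hpos : 0 < orderOf (2 : ZMod r) :=
    (isOfFinOrder_iff_pow_eq_one.mpr ⟨m, hm0, hpow⟩).orderOf_pos
  refine ⟨hdvd', ?_, hpos⟩
  have h2 : (2 : ZMod r) ^ orderOf (2 : ZMod r) = 1 := pow_orderOf_eq_one _
  have h1 : (1:ℕ) ≤ 2 ^ orderOf (2 : ZMod r) := Nat.one_le_two_pow
  rw [← ZMod.natCast_eq_zero_iff]
  have : ((2 ^ orderOf (2 : ZMod r) : ℕ) : ZMod r) = 1 := by push_cast; exact h2
  rw [Nat.cast_sub h1, this, Nat.cast_one, sub_self]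

theorem order_eq_m_of_coprime_factorization (m r₁ r₂ : ℕ) (hm : 2 ≤ m)
    (hr₁ : 1 < r₁) (hr₂ : 1 < r₂) (hmul : r₁ * r₂ = 2 ^ m - 1)
    (hcop : Nat.Coprime r₁ r₂) :
    orderOf (2 : ZMod r₁) = m ∨ orderOf (2 : ZMod r₂) = m := by
  obtain ⟨ha, hra, hapos⟩ := aux_order_dvd m r₁ hr₁ (by omega) ⟨r₂, hmul.symm⟩
  obtain ⟨hb, hrb, hbpos⟩ := aux_order_dvd m r₂ hr₂ (by omega) ⟨r₁, by rw [mul_comm]; exact hmul.symm⟩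
  set a := orderOf (2 : ZMod r₁)
  set b := orderOf (2 : ZMod r₂)
  by_contra h
  push_neg at h
  obtain ⟨hne1, hne2⟩ := h
  -- a, b are proper divisors of m, so 2a ≤ m and 2b ≤ m
  have h2a : 2 * a ≤ m := by
    obtain ⟨k, hk⟩ := ha
    have hk2 : 2 ≤ k := by
      rcases k with _ | _ | k
      · omega
      · omega
      · omega
    calc 2 * a ≤ a * k := by nlinarith
    _ = m := hk.symm
  have h2b : 2 * b ≤ m := by
    obtain ⟨k, hk⟩ := hb
    have hk2 : 2 ≤ k := by
      rcases k with _ | _ | k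
      · omega
      · omega
      · omega
    calc 2 * b ≤ b * k := by nlinarith
    _ = m := hk.symm
  have hx : (2:ℕ) ≤ 2 ^ a := by
    calc (2:ℕ) = 2 ^ 1 := rfl
    _ ≤ 2 ^ a := Nat.pow_le_pow_right (by norm_num) hapos
  have hy : (2:ℕ) ≤ 2 ^ b := by
    calc (2:ℕ) = 2 ^ 1 := rfl
    _ ≤ 2 ^ b := Nat.pow_le_pow_right (by norm_num) hbpos
  have hxy : 2 ^ a * 2 ^ b ≤ 2 ^ m := by
    rw [← pow_add]
    exact Nat.pow_le_pow_right (by norm_num) (by omega)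
  have hle1 : r₁ ≤ 2 ^ a - 1 := Nat.le_of_dvd (by omega) hra
  have hle2 : r₂ ≤ 2 ^ b - 1 := Nat.le_of_dvd (by omega) hrb
  have hlt : r₁ * r₂ < 2 ^ m - 1 := by
    calc r₁ * r₂ ≤ (2 ^ a - 1) * (2 ^ b - 1) := Nat.mul_le_mul hle1 hle2
    _ < 2 ^ m - 1 := by
        have h4 : (4:ℕ) ≤ 2 ^ m := by
          calc (4:ℕ) = 2 ^ 2 := rfl
          _ ≤ 2 ^ m := Nat.pow_le_pow_right (by norm_num) hm
        zify [show (1:ℕ) ≤ 2 ^ a by omega, show (1:ℕ) ≤ 2 ^ b by omega,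
          show (1:ℕ) ≤ 2 ^ m by omega]
        nlinarith
  omega
end

section
/- If a and b are positive integers with a < b, lcm(a, b) = m, and m < a + b, then gcd(a, b) = a (i.e., a divides b) and b = m. -/
theorem gcd_eq_and_b_eq_m (a b m : ℕ) (ha : 0 < a) (hab : a < b)
    (hlcm : Nat.lcm a b = m) (hsum : m < a + b) :
    Nat.gcd a b = a ∧ b = m := by
  have hb : 0 < b := lt_trans ha hab
  have hpos : 0 < Nat.lcm a b := Nat.lcm_pos ha hb
  obtain ⟨k, hk⟩ := Nat.dvd_lcm_right a b
  have hm : m = b * k := by rw [← hlcm, hk]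
  have hk1 : k = 1 := by
    match k, hm with
    | 0, hm => omega
    | 1, hm => rfl
    | (n+2), hm =>
      exfalso
      have h2 : 2 * b ≤ b * (n + 2) := by nlinarith
      omega
  have hbm : b = m := by subst hk1; omega
  have hadvd : a ∣ b := by
    have := Nat.dvd_lcm_left a b
    rwa [hk, hk1, mul_one] at this
  exact ⟨Nat.gcd_eq_left hadvd, hbm⟩
end

section
/- Let r be a positive natural number and let x₁ < x₂ < ⋯ < x_h be h distinct natural numbers with 0 ≤ x₁ and x_h < r. Then there exists μ ∈ ℕ such that for every i, ⌈r/h⌉ − 1 ≤ (x_i + μ) mod r < r, and moreover (x_j + μ) mod r = r − 1 for some j. -/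
theorem shift_points_lemma (r h : ℕ) (hh : 1 ≤ h) (hhr : h ≤ r)
    (x : Fin h → ℕ) (hmono : StrictMono x) (hlt : ∀ i, x i < r) :
    ∃ μ : ℕ, (∀ i, (r + h - 1) / h - 1 ≤ (x i + μ) % r ∧ (x i + μ) % r < r) ∧
      ∃ j, (x j + μ) % r = r - 1 := by
  have hr : 0 < r := hh.trans hhr
  obtain ⟨m, hm⟩ : ∃ m, m = (r - 1) / h := ⟨_, rfl⟩
  have hceil : (r + h - 1) / h - 1 = m := by
    have h1 : r + h - 1 = (r - 1) + h := by omega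
    rw [h1, Nat.add_div_right _ hh, hm]
    exact Nat.add_sub_cancel _ _
  have hlast : h - 1 < h := by omega
  set y : ℕ → ℕ := fun n => x ⟨min n (h - 1), by omega⟩ with hy'
  have hy : ∀ n (hn : n < h), y n = x ⟨n, hn⟩ := by
    intro n hn
    simp [hy', Nat.min_eq_left (by omega : n ≤ h - 1)]
  have hxmono : ∀ (a b : Fin h), a.val < b.val → x a < x b := by
    intro a b hab; exact hmono hab
  have hxmono' : ∀ (a b : Fin h), a.val ≤ b.val → x a ≤ x b := by
    intro a b hab
    rcases eq_or_lt_of_le hab with he | hl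
    · exact le_of_eq (congrArg x (Fin.ext he))
    · exact (hxmono a b hl).le
  set g : ℕ → ℕ := fun j => if j + 1 < h then y (j + 1) - y j else r - y j + y 0 with hg'
  have claim : ∃ j, j < h ∧ m + 1 ≤ g j := by
    by_contra hc
    push_neg at hc
    have key : ∀ i, i < h → y i ≤ y 0 + i * m := by
      intro i
      induction i with
      | zero => intro _; omega
      | succ n ih =>
        intro hn1
        have hn : n < h := by omega
        have h1 := ih hn
        have h2 := hc n hn
        rw [hg'] at h2
        simp only [if_pos hn1] at h2
        have h3 : y n < y (n + 1) := by
          rw [hy n hn, hy (n + 1) hn1]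
          exact hxmono _ _ (show n < n + 1 by omega)
        have h4 : y (n + 1) ≤ y n + m := by omega
        calc y (n + 1) ≤ y n + m := h4
          _ ≤ y 0 + n * m + m := by omega
          _ = y 0 + (n + 1) * m := by ring
    have k1 := key (h - 1) hlast
    have k2 := hc (h - 1) hlast
    rw [hg'] at k2
    simp only [if_neg (by omega : ¬(h - 1 + 1 < h))] at k2
    have k3 : y (h - 1) < r := by rw [hy _ hlast]; exact hlt _
    have k4 : (h - 1) * m + m = h * m := by
      rcases h with _ | n
      · omega
      · simp only [Nat.add_sub_cancel]
        ring
    have k5 : h * m ≤ r - 1 := by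
      rw [hm]
      calc h * ((r - 1) / h) = (r - 1) / h * h := by ring
        _ ≤ r - 1 := Nat.div_mul_le_self _ _
    omega
  obtain ⟨j, hjh, hgap⟩ := claim
  set jf : Fin h := ⟨j, hjh⟩ with hjf
  have hjfx : x (⟨j, hjh⟩ : Fin h) = x jf := rfl
  refine ⟨r - 1 - x jf, ?_, jf, ?_⟩
  · intro i
    rw [hceil]
    have hxj : x jf ≤ r - 1 := by have := hlt jf; omega
    have hmr : m ≤ r - 1 := by rw [hm]; exact Nat.div_le_self _ _
    constructor
    · rcases lt_trichotomy i.val j with hij | hij | hij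
      · -- i < jf
        have hxixj : x i < x jf := hxmono i jf hij
        have hkey : m + 1 ≤ r - x jf + x i := by
          rw [hg'] at hgap
          by_cases hj1 : j + 1 < h
          · simp only [if_pos hj1] at hgap
            rw [hy j hjh, hy (j + 1) hj1, hjfx] at hgap
            have h5 : x (⟨j + 1, hj1⟩ : Fin h) < r := hlt _
            omega
          · simp only [if_neg hj1] at hgap
            rw [hy j hjh, hy 0 (by omega), hjfx] at hgap
            have h5 : x (⟨0, by omega⟩ : Fin h) ≤ x i :=
              hxmono' _ _ (show 0 ≤ i.val by omega)
            omega
        have hval : x i + (r - 1 - x jf) = x i + r - 1 - x jf := by omega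
        have hlt2 : x i + r - 1 - x jf < r := by omega
        rw [hval, Nat.mod_eq_of_lt hlt2]
        omega
      · -- i = jf
        have he : x i = x jf := congrArg x (Fin.ext hij)
        rw [he]
        have hv : x jf + (r - 1 - x jf) = r - 1 := by omega
        rw [hv, Nat.mod_eq_of_lt (by omega)]
        omega
      · -- i > jf
        have hj1 : j + 1 < h := by omega
        rw [hg'] at hgap
        simp only [if_pos hj1] at hgap
        rw [hy j hjh, hy (j + 1) hj1, hjfx] at hgap
        have h5 : x (⟨j + 1, hj1⟩ : Fin h) ≤ x i :=
          hxmono' _ _ (show j + 1 ≤ i.val by omega)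
        have h6 : x jf < x (⟨j + 1, hj1⟩ : Fin h) :=
          hxmono _ _ (show j < j + 1 by omega)
        have h7 : x jf + m + 1 ≤ x i := by omega
        have hri := hlt i
        have hval : x i + (r - 1 - x jf) = (x i - x jf - 1) + r := by omega
        rw [hval, Nat.add_mod_right, Nat.mod_eq_of_lt (by omega)]
        omega
    · exact Nat.mod_lt _ hr
  · have hxj : x jf ≤ r - 1 := by have := hlt jf; omega
    have hv : x jf + (r - 1 - x jf) = r - 1 := by omega
    rw [hv, Nat.mod_eq_of_lt (by omega)]
end

section
/- Let r₁, r₂ be coprime natural numbers greater than 1, let m ≥ 1, and set λ₀ = max{λ ∈ ℕ : λ ≥ 1 and m < ⌈r₁/λ⌉} (assume such λ exists, i.e. m < r₁). Let s = (λ₀ + 1)·r₂ − 1 and let Γ = {(i₁, i₂) ∈ ℤ/r₁ × ℤ/r₂ : the representative of i₁ in {0,…,r₁−1} is < m, and i₂ = 0}. Then for every subset B ⊆ ℤ/r₁ × ℤ/r₂ with |B| = s, there exist translations τ₁ by an element of ℤ/r₁ in the first coordinate and τ₂ by an element of ℤ/r₂ in the second coordinate such that (τ₁ ∘ τ₂)(B)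 ∩ Γ = ∅. -/
theorem translations_move_out (r₁ r₂ m lam0 s : ℕ)
    (hr₁ : 1 < r₁) (hr₂ : 1 < r₂) (hcop : Nat.Coprime r₁ r₂)
    (hm : 1 ≤ m) (hmr : m < r₁)
    (hlam0 : IsGreatest {l : ℕ | 1 ≤ l ∧ m < (r₁ + l - 1) / l} lam0)
    (hs : s = (lam0 + 1) * r₂ - 1)
    (B : Finset (ZMod r₁ × ZMod r₂)) (hB : B.card = s) :
    ∃ (d₁ : ZMod r₁) (d₂ : ZMod r₂),
      ∀ p ∈ B, ¬((p.1 + d₁).val < m ∧ p.2 + d₂ = 0) := by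
  haveI : NeZero r₁ := ⟨by omega⟩
  haveI : NeZero r₂ := ⟨by omega⟩
  obtain ⟨⟨hl1, hlm⟩, _⟩ := hlam0
  -- key inequality: lam0 * m < r₁
  have hlam_m : lam0 * m < r₁ := by
    have h1 : m + 1 ≤ (r₁ + lam0 - 1) / lam0 := hlm
    have h2 : (m + 1) * lam0 ≤ r₁ + lam0 - 1 :=
      (Nat.le_div_iff_mul_le (by omega)).mp h1
    rw [add_mul, one_mul] at h2
    have h5 : m * lam0 + lam0 < r₁ + lam0 := lt_of_le_of_lt h2 (by omega)
    rw [mul_comm]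
    exact Nat.lt_of_add_lt_add_right h5
  -- pigeonhole: find a fiber in the second coordinate with ≤ lam0 elements
  have hcard2 : (Finset.univ : Finset (ZMod r₂)).card = r₂ := by
    simp [ZMod.card]
  have hpig : ∃ c : ZMod r₂, (B.filter fun p => p.2 = c).card < lam0 + 1 := by
    have h : B.card < (Finset.univ : Finset (ZMod r₂)).card * (lam0 + 1) := by
      rw [hcard2, hB, hs]
      have : 1 ≤ (lam0 + 1) * r₂ := Nat.mul_pos (by omega) (by omega)
      calc (lam0 + 1) * r₂ - 1 < (lam0 + 1) * r₂ := by omega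
        _ = r₂ * (lam0 + 1) := by ring
    obtain ⟨c, _, hc⟩ := Finset.exists_card_fiber_lt_of_card_lt_mul h
    exact ⟨c, hc⟩
  obtain ⟨c, hc⟩ := hpig
  -- set of first coordinates of that fiber
  set S : Finset (ZMod r₁) := (B.filter fun p => p.2 = c).image Prod.fst with hS
  have hScard : S.card ≤ lam0 := by
    calc S.card ≤ (B.filter fun p => p.2 = c).card := Finset.card_image_le
      _ ≤ lam0 := by omega
  -- for each x, the set of bad shifts has card m
  have hsingle : ∀ x : ZMod r₁,
      (Finset.univ.filter fun d : ZMod r₁ => (x + d).val < m).card = m := by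
    intro x
    have : (Finset.univ.filter fun d : ZMod r₁ => (x + d).val < m).card
        = (Finset.range m).card := by
      apply Finset.card_bij (fun d _ => (x + d).val)
      · intro d hd
        simp only [Finset.mem_filter] at hd
        simpa using hd.2
      · intro a ha b hb hab
        simp only [Finset.mem_filter] at ha hb
        have : x + a = x + b := ZMod.val_injective _ hab
        exact add_left_cancel this
      · intro k hk
        simp only [Finset.mem_range] at hk
        refine ⟨(k : ZMod r₁) - x, ?_, ?_⟩
        · simp only [Finset.mem_filter, Finset.mem_univ, true_and]
          rw [add_sub_cancel, ZMod.val_natCast_of_lt (by omega)]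
          omega
        · rw [add_sub_cancel, ZMod.val_natCast_of_lt (by omega)]
    simpa using this
  -- the set of bad shifts is small
  set D : Finset (ZMod r₁) := S.biUnion
    (fun x => Finset.univ.filter fun d : ZMod r₁ => (x + d).val < m) with hD
  have hDcard : D.card < r₁ := by
    calc D.card ≤ ∑ x ∈ S, (Finset.univ.filter fun d : ZMod r₁ => (x + d).val < m).card :=
          Finset.card_biUnion_le
      _ = ∑ x ∈ S, m := by simp [hsingle]
      _ = S.card * m := by rw [Finset.sum_const, smul_eq_mul]
      _ ≤ lam0 * m := Nat.mul_le_mul_right m hScard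
      _ < r₁ := hlam_m
  have : D ≠ Finset.univ := by
    intro h
    rw [h] at hDcard
    simp [ZMod.card] at hDcard
  obtain ⟨d₁, hd₁⟩ : ∃ d₁ : ZMod r₁, d₁ ∉ D := by
    by_contra h
    push_neg at h
    exact this (Finset.eq_univ_iff_forall.mpr h)
  refine ⟨d₁, -c, ?_⟩
  rintro p hp ⟨h1, h2⟩
  have hpc : p.2 = c := by
    have := h2
    rwa [add_neg_eq_zero] at this
  apply hd₁
  rw [hD]
  refine Finset.mem_biUnion.mpr ⟨p.1, ?_, ?_⟩
  · exact Finset.mem_image.mpr ⟨p, Finset.mem_filter.mpr ⟨hp, hpc⟩, rfl⟩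
  · simp only [Finset.mem_filter, Finset.mem_univ, true_and]
    exact h1
end

section
/- If a and b are positive integers with a < b, and lcm(a, b) = m with m < a + b, then a = gcd(a, b). -/
theorem gcd_eq_of_lcm_lt_add (a b m : ℕ) (ha : 0 < a) (hab : a < b)
    (hlcm : Nat.lcm a b = m) (hsum : m < a + b) :
    a = Nat.gcd a b := by
  subst hlcm
  have hb : 0 < b := ha.trans hab
  have hdvd : b ∣ Nat.lcm a b := Nat.dvd_lcm_right a b
  have hpos : 0 < Nat.lcm a b := Nat.lcm_pos ha hb
  have hlt : Nat.lcm a b < 2 * b := by omega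
  have heq : Nat.lcm a b = b := by
    obtain ⟨k, hk⟩ := hdvd
    have : k = 1 := by nlinarith
    subst this; omega
  have : a ∣ b := heq ▸ Nat.dvd_lcm_left a b
  exact (Nat.gcd_eq_left this).symm
end
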